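/- Let ν > -1 be real. Then every complex zero of f_ν is a negative real number: if w ∈ ℂ and f_ν(w) = 0, then w is real and w < 0. (Equivalently: all zeros of the Bessel function J_ν are real, and all zeros of the modified Bessel function I_ν off the branch cut are purely imaginary; in particular I_ν(x) ≠ 0 for every real x > 0.) -/

import Mathlib

/-- The entire function `f_ν(w) = Σ_{m=0}^∞ w^m / (m! · Γ(m+ν+1))`,
where `Γ` is the complex Gamma function. -/
noncomputable def besselF (ν : ℝ) (w : ℂ) : ℂ :=
  ∑' m : ℕ, w ^ m / ((m.factorial : ℂ) * Complex.Gamma ((m : ℂ) + (ν : ℂ) + 1))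

/-!
Write `f_ν(w) = Σ c_m w^m` with `c_m = 1 / (m! Γ(m+ν+1)) > 0`, and consider the Lommel-type sum
`T(w, v) = Σ_{m,n} c_m c_n w^m v^n / (m+n+ν+1)`. The recursion `c_m = (m+1)(m+1+ν) c_{m+1}` turns
multiplication by `v` (resp. `w`) into an index shift, and comparing the shifted sums gives
`(v - w) T(w, v) = f_ν(w) · v f_ν'(v) - w f_ν'(w) · f_ν(v)`.
Since `1 / (m+n+ν+1) = ∫₀¹ s^(m+n+ν) ds`, also `T(w, w̄) = ∫₀¹ |f_ν(ws)|² s^ν ds > 0`.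
If `f_ν(w) = 0` then `f_ν(w̄) = 0` too, so `(w̄ - w) T(w, w̄) = 0` forces `w` to be real;
and `f_ν > 0` on `[0, ∞)` because all `c_m` are positive.
-/

open Complex Set MeasureTheory
open scoped Nat ComplexConjugate

noncomputable section

def besselCoeff (ν : ℝ) (m : ℕ) : ℝ := (m ! * Real.Gamma (m + ν + 1))⁻¹

def besselTerm (ν : ℝ) (w : ℂ) (m : ℕ) : ℂ := besselCoeff ν m * w ^ m

theorem besselCoeff_pos {ν : ℝ} (hν : -1 < ν) (m : ℕ) : 0 < besselCoeff ν m := by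
  have := Real.Gamma_pos_of_pos (s := m + ν + 1) (by linarith [m.cast_nonneg (α := ℝ)])
  unfold besselCoeff
  positivity

theorem besselCoeff_eq_mul_succ (ν : ℝ) (m : ℕ) :
    besselCoeff ν m = (m + 1) * (m + 1 + ν) * besselCoeff ν (m + 1) := by
  rcases eq_or_ne ((m : ℝ) + ν + 1) 0 with h | h
  · simp [besselCoeff, h, add_right_comm _ (1 : ℝ) ν]
  · simp only [besselCoeff, Nat.factorial_succ, Nat.cast_mul, Nat.cast_succ,
      add_right_comm _ (1 : ℝ) ν, Real.Gamma_add_one h]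
    field_simp

theorem ofReal_besselCoeff (ν : ℝ) (m : ℕ) :
    (besselCoeff ν m : ℂ) = (m ! * Gamma (m + ν + 1))⁻¹ := by
  rw [besselCoeff, ofReal_inv, ofReal_mul, ← Gamma_ofReal]
  push_cast
  rfl

theorem besselF_eq_tsum (ν : ℝ) (w : ℂ) : besselF ν w = ∑' m, besselTerm ν w m :=
  tsum_congr fun m ↦ by rw [besselTerm, ofReal_besselCoeff, div_eq_inv_mul]

theorem regularizedHGFunSeries_apply_eq_besselTerm (ν : ℝ) (w : ℂ) (m : ℕ) :
    regularizedHGFunSeries 0 {(ν : ℂ) + 1} m (fun _ ↦ w) = besselTerm ν w m := by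
  simp only [regularizedHGFunSeries, FormalMultilinearSeries.ofScalars_apply_eq, besselTerm,
    regularizedHGFunCoeff, ofReal_besselCoeff, smul_eq_mul, Multiset.map_zero,
    Multiset.prod_zero, Multiset.map_singleton, Multiset.prod_singleton, one_div]
  rw [add_right_comm, add_comm (ν : ℂ), mul_comm]

theorem radius_regularizedHGFunSeries_zero_singleton (c : ℂ) :
    (regularizedHGFunSeries 0 {c}).radius = ⊤ :=
  radius_regularizedHGFunSeries_eq_top (by simp)

theorem besselF_eq_regularizedHGFun (ν : ℝ) : besselF ν = regularizedHGFun 0 {(ν : ℂ) + 1} := by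
  ext w
  simp_rw [besselF_eq_tsum, regularizedHGFun, FormalMultilinearSeries.sum,
    regularizedHGFunSeries_apply_eq_besselTerm]

theorem summable_norm_besselTerm (ν : ℝ) (w : ℂ) : Summable fun m ↦ ‖besselTerm ν w m‖ := by
  simp_rw [← regularizedHGFunSeries_apply_eq_besselTerm]
  exact FormalMultilinearSeries.summable_norm_apply _
    (by simp [radius_regularizedHGFunSeries_zero_singleton])

theorem continuous_besselF (ν : ℝ) : Continuous (besselF ν) := by
  rw [besselF_eq_regularizedHGFun, ← continuousOn_univ, ← Metric.eball_top_eq_univ 0,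
    ← radius_regularizedHGFunSeries_zero_singleton]
  exact FormalMultilinearSeries.continuousOn

theorem hasSum_besselTerm (ν : ℝ) (w : ℂ) : HasSum (besselTerm ν w) (besselF ν w) :=
  besselF_eq_tsum ν w ▸ (summable_norm_besselTerm ν w).of_norm.hasSum

theorem norm_besselTerm {ν : ℝ} (hν : -1 < ν) (w : ℂ) (m : ℕ) :
    ‖besselTerm ν w m‖ = besselCoeff ν m * ‖w‖ ^ m := by
  rw [besselTerm, norm_mul, norm_pow, norm_real, Real.norm_of_nonneg (besselCoeff_pos hν m).le]

theorem mul_besselTerm (ν : ℝ) (w : ℂ) (m : ℕ) :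
    w * besselTerm ν w m = (m + 1) * (m + 1 + ν) * besselTerm ν w (m + 1) := by
  simp only [besselTerm, besselCoeff_eq_mul_succ ν m]
  push_cast
  ring

theorem besselTerm_mul_ofReal (ν : ℝ) (w : ℂ) (s : ℝ) (m : ℕ) :
    besselTerm ν (w * s) m = besselTerm ν w m * (s ^ m : ℝ) := by
  push_cast [besselTerm]
  ring

theorem conj_besselTerm (ν : ℝ) (w : ℂ) (m : ℕ) :
    conj (besselTerm ν w m) = besselTerm ν (conj w) m := by
  simp [besselTerm]

theorem besselF_conj (ν : ℝ) (w : ℂ) : besselF ν (conj w) = conj (besselF ν w) := by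
  simp_rw [besselF_eq_tsum, conj_tsum, conj_besselTerm]

theorem besselF_ofReal_ne_zero {ν : ℝ} (hν : -1 < ν) {x : ℝ} (hx : 0 ≤ x) :
    besselF ν x ≠ 0 := by
  have hsum : Summable fun m ↦ besselCoeff ν m * x ^ m := by
    simpa [norm_besselTerm hν, abs_of_nonneg hx] using summable_norm_besselTerm ν x
  have hpos : 0 < ∑' m, besselCoeff ν m * x ^ m :=
    hsum.tsum_pos (fun m ↦ by have := besselCoeff_pos hν m; positivity) 0
      (by simpa using besselCoeff_pos hν 0)
  have hF : besselF ν x = ↑(∑' m, besselCoeff ν m * x ^ m) := by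
    push_cast [besselF_eq_tsum, ofReal_tsum, besselTerm]
    rfl
  exact hF ▸ ofReal_ne_zero.2 hpos.ne'

theorem summable_norm_natCast_mul_besselTerm (ν : ℝ) (w : ℂ) :
    Summable fun m : ℕ ↦ ‖(m : ℂ) * besselTerm ν w m‖ := by
  refine (summable_norm_besselTerm ν (2 * w)).of_nonneg_of_le (fun _ ↦ norm_nonneg _) fun m ↦ ?_
  have hm : (m : ℝ) ≤ 2 ^ m := mod_cast Nat.lt_two_pow_self.le
  calc ‖(m : ℂ) * besselTerm ν w m‖ = m * ‖besselTerm ν w m‖ := by rw [norm_mul, norm_natCast]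
    _ ≤ 2 ^ m * ‖besselTerm ν w m‖ := by gcongr
    _ = ‖besselTerm ν (2 * w) m‖ := by simp [besselTerm, mul_pow]; ring

/-- `w f_ν'(w)`. -/
def besselG (ν : ℝ) (w : ℂ) : ℂ := ∑' m : ℕ, m * besselTerm ν w m

theorem hasSum_besselG (ν : ℝ) (w : ℂ) :
    HasSum (fun m : ℕ ↦ m * besselTerm ν w m) (besselG ν w) :=
  (summable_norm_natCast_mul_besselTerm ν w).of_norm.hasSum

def lommelTerm (ν : ℝ) (w v : ℂ) (p : ℕ × ℕ) : ℂ :=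
  besselTerm ν w p.1 * besselTerm ν v p.2 / (p.1 + p.2 + ν + 1 : ℝ)

def lommelSum (ν : ℝ) (w v : ℂ) : ℂ := ∑' p, lommelTerm ν w v p

theorem summable_norm_lommelTerm {ν : ℝ} (hν : -1 < ν) (w v : ℂ) :
    Summable fun p ↦ ‖lommelTerm ν w v p‖ := by
  refine (((summable_norm_besselTerm ν w).mul_norm (summable_norm_besselTerm ν v)).div_const
    (ν + 1)).of_nonneg_of_le (fun _ ↦ norm_nonneg _) fun p ↦ ?_
  have hd : ν + 1 ≤ p.1 + p.2 + ν + 1 := by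
    linarith [p.1.cast_nonneg (α := ℝ), p.2.cast_nonneg (α := ℝ)]
  rw [lommelTerm, norm_div, norm_real, Real.norm_of_nonneg (by linarith), norm_mul]
  gcongr
  linarith

theorem hasSum_comp_succ_fst_iff {α : Type*} [AddCommMonoid α] [TopologicalSpace α]
    {f : ℕ × ℕ → α} {a : α} (hf : ∀ n, f (0, n) = 0) :
    HasSum (fun p : ℕ × ℕ ↦ f (p.1 + 1, p.2)) a ↔ HasSum f a :=
  (Nat.succ_injective.prodMap Function.injective_id).hasSum_iff <| by
    rintro ⟨_ | m, n⟩ h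
    exacts [hf n, (h ⟨(m, n), rfl⟩).elim]

theorem hasSum_comp_succ_snd_iff {α : Type*} [AddCommMonoid α] [TopologicalSpace α]
    {f : ℕ × ℕ → α} {a : α} (hf : ∀ m, f (m, 0) = 0) :
    HasSum (fun p : ℕ × ℕ ↦ f (p.1, p.2 + 1)) a ↔ HasSum f a :=
  (Function.injective_id.prodMap Nat.succ_injective).hasSum_iff <| by
    rintro ⟨m, _ | n⟩ h
    exacts [hf m, (h ⟨(m, n), rfl⟩).elim]

def lommelWeight (ν : ℝ) (m n : ℕ) : ℝ := n * (n + ν) / (m + n + ν)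

theorem lommelWeight_sub_lommelWeight {ν : ℝ} (hν : -1 < ν) (m n : ℕ) :
    lommelWeight ν m n - lommelWeight ν n m = n - m := by
  rw [lommelWeight, lommelWeight, add_comm (n : ℝ) m]
  rcases eq_or_ne ((m : ℝ) + n + ν) 0 with h | h
  -- the junk case `x / 0 = 0`: it occurs only for `m = n = 0`, where both sides vanish
  · obtain ⟨rfl, rfl⟩ : m = 0 ∧ n = 0 := by
      have : m + n < 1 := by exact_mod_cast (by linarith : (m + n : ℝ) < 1)
      omega
    simp
  · field_simp
    ring

theorem hasSum_mul_lommelSum_right {ν : ℝ} (hν : -1 < ν) (w v : ℂ) :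
    HasSum (fun p : ℕ × ℕ ↦ lommelWeight ν p.1 p.2 * (besselTerm ν w p.1 * besselTerm ν v p.2))
      (v * lommelSum ν w v) := by
  rw [← hasSum_comp_succ_snd_iff (by simp [lommelWeight])]
  refine ((summable_norm_lommelTerm hν w v).of_norm.hasSum.mul_left v).congr_fun fun ⟨m, n⟩ ↦ ?_
  rw [lommelTerm, mul_div_assoc', mul_left_comm v, mul_besselTerm, lommelWeight]
  push_cast
  ring

theorem hasSum_mul_lommelSum_left {ν : ℝ} (hν : -1 < ν) (w v : ℂ) :
    HasSum (fun p : ℕ × ℕ ↦ lommelWeight ν p.2 p.1 * (besselTerm ν w p.1 * besselTerm ν v p.2))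
      (w * lommelSum ν w v) := by
  rw [← hasSum_comp_succ_fst_iff (by simp [lommelWeight])]
  refine ((summable_norm_lommelTerm hν w v).of_norm.hasSum.mul_left w).congr_fun fun ⟨m, n⟩ ↦ ?_
  rw [lommelTerm, mul_div_assoc', ← mul_assoc w, mul_besselTerm, lommelWeight]
  push_cast
  ring

theorem sub_mul_lommelSum {ν : ℝ} (hν : -1 < ν) (w v : ℂ) :
    (v - w) * lommelSum ν w v = besselF ν w * besselG ν v - besselG ν w * besselF ν v := by
  have hFG : HasSum (fun p : ℕ × ℕ ↦ besselTerm ν w p.1 * (p.2 * besselTerm ν v p.2))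
      (besselF ν w * besselG ν v) :=
    HasSum.mul (f := besselTerm ν w) (g := fun n : ℕ ↦ n * besselTerm ν v n)
      (hasSum_besselTerm ν w) (hasSum_besselG ν v) <|
        summable_mul_of_summable_norm (R := ℂ) (f := besselTerm ν w)
          (g := fun n : ℕ ↦ n * besselTerm ν v n)
          (summable_norm_besselTerm ν w) (summable_norm_natCast_mul_besselTerm ν v)
  have hGF : HasSum (fun p : ℕ × ℕ ↦ p.1 * besselTerm ν w p.1 * besselTerm ν v p.2)
      (besselG ν w * besselF ν v) :=
    HasSum.mul (f := fun n : ℕ ↦ n * besselTerm ν w n) (g := besselTerm ν v)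
      (hasSum_besselG ν w) (hasSum_besselTerm ν v) <|
        summable_mul_of_summable_norm (R := ℂ) (f := fun n : ℕ ↦ n * besselTerm ν w n)
          (g := besselTerm ν v)
          (summable_norm_natCast_mul_besselTerm ν w) (summable_norm_besselTerm ν v)
  have h := (hasSum_mul_lommelSum_right hν w v).sub (hasSum_mul_lommelSum_left hν w v)
  rw [← sub_mul] at h
  refine h.unique ((hFG.sub hGF).congr_fun fun p ↦ ?_)
  rw [← sub_mul, ← ofReal_sub, lommelWeight_sub_lommelWeight hν]
  push_cast
  ring

theorem integrableOn_pow_mul_rpow {ν : ℝ} (hν : -1 < ν) (k : ℕ) :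
    IntegrableOn (fun s : ℝ ↦ s ^ k * s ^ ν) (Ioo 0 1) := by
  have hk : -1 < (k : ℝ) + ν := by linarith [k.cast_nonneg (α := ℝ)]
  refine ((intervalIntegral.integrableOn_Ioo_rpow_iff one_pos).2 hk).congr_fun
    (fun s hs ↦ ?_) measurableSet_Ioo
  simp only [Real.rpow_add hs.1, Real.rpow_natCast]

theorem integral_pow_mul_rpow {ν : ℝ} (hν : -1 < ν) (k : ℕ) :
    ∫ s in Ioo (0 : ℝ) 1, s ^ k * s ^ ν = (k + ν + 1)⁻¹ := by
  have hk : -1 < (k : ℝ) + ν := by linarith [k.cast_nonneg (α := ℝ)]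
  rw [setIntegral_congr_fun measurableSet_Ioo (g := fun s ↦ s ^ ((k : ℝ) + ν))
    (fun s hs ↦ by simp only [Real.rpow_add hs.1, Real.rpow_natCast]),
    ← integral_Ioc_eq_integral_Ioo, ← intervalIntegral.integral_of_le zero_le_one,
    integral_rpow (.inl hk), Real.zero_rpow (by linarith), Real.one_rpow]
  ring

theorem besselTerm_mul_besselTerm_mul_rpow (ν : ℝ) (w v : ℂ) (m n : ℕ) (s : ℝ) :
    besselTerm ν (w * s) m * besselTerm ν (v * s) n * (s ^ ν : ℝ) =
      besselTerm ν w m * besselTerm ν v n * (s ^ (m + n) * s ^ ν : ℝ) := by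
  push_cast [besselTerm_mul_ofReal, pow_add]
  ring

theorem integral_besselTerm_mul_besselTerm_mul_rpow {ν : ℝ} (hν : -1 < ν) (w v : ℂ)
    (p : ℕ × ℕ) :
    ∫ s in Ioo (0 : ℝ) 1, besselTerm ν (w * s) p.1 * besselTerm ν (v * s) p.2 * (s ^ ν : ℝ) =
      lommelTerm ν w v p := by
  simp_rw [besselTerm_mul_besselTerm_mul_rpow]
  rw [integral_const_mul, integral_complex_ofReal, integral_pow_mul_rpow hν, lommelTerm]
  push_cast
  ring

theorem integral_norm_besselTerm_mul_besselTerm_mul_rpow {ν : ℝ} (hν : -1 < ν) (w v : ℂ)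
    (p : ℕ × ℕ) :
    ∫ s in Ioo (0 : ℝ) 1, ‖besselTerm ν (w * s) p.1 * besselTerm ν (v * s) p.2 * (s ^ ν : ℝ)‖ =
      ‖lommelTerm ν w v p‖ := by
  rw [setIntegral_congr_fun measurableSet_Ioo
    (g := fun s ↦ ‖besselTerm ν w p.1 * besselTerm ν v p.2‖ * (s ^ (p.1 + p.2) * s ^ ν))
    fun s hs ↦ by
      rw [besselTerm_mul_besselTerm_mul_rpow, norm_mul, norm_real,
        Real.norm_of_nonneg (by have := hs.1.le; positivity)]]
  rw [integral_const_mul, integral_pow_mul_rpow hν, lommelTerm, norm_div, norm_real,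
    Real.norm_of_nonneg (by linarith [p.1.cast_nonneg (α := ℝ), p.2.cast_nonneg (α := ℝ)])]
  push_cast
  ring

theorem lommelSum_eq_integral {ν : ℝ} (hν : -1 < ν) (w v : ℂ) :
    lommelSum ν w v =
      ∫ s in Ioo (0 : ℝ) 1, besselF ν (w * s) * besselF ν (v * s) * (s ^ ν : ℝ) := by
  have hint (p : ℕ × ℕ) : IntegrableOn
      (fun s : ℝ ↦ besselTerm ν (w * s) p.1 * besselTerm ν (v * s) p.2 * (s ^ ν : ℝ))
      (Ioo 0 1) := by
    simp_rw [besselTerm_mul_besselTerm_mul_rpow]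
    exact (integrableOn_pow_mul_rpow hν _).ofReal.const_mul _
  have h := hasSum_integral_of_summable_integral_norm hint <| by
    simpa only [integral_norm_besselTerm_mul_besselTerm_mul_rpow hν] using
      summable_norm_lommelTerm hν w v
  simp_rw [integral_besselTerm_mul_besselTerm_mul_rpow hν] at h
  rw [lommelSum, h.tsum_eq]
  congr 1 with s
  rw [tsum_mul_right, ← tsum_mul_tsum_of_summable_norm (summable_norm_besselTerm ν _)
    (summable_norm_besselTerm ν _), ← besselF_eq_tsum, ← besselF_eq_tsum]

theorem integral_mul_rpow_pos {ν : ℝ} (hν : -1 < ν) {g : ℝ → ℝ} (hg : Continuous g)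
    (hg_nonneg : ∀ s, 0 ≤ g s) (hg0 : g 0 ≠ 0) : 0 < ∫ s in Ioo (0 : ℝ) 1, g s * s ^ ν := by
  obtain ⟨C, hC⟩ := isCompact_Icc.exists_bound_of_continuousOn (hg.continuousOn (s := Icc 0 1))
  have hint : IntegrableOn (fun s ↦ g s * s ^ ν) (Ioo 0 1) :=
    ((intervalIntegral.integrableOn_Ioo_rpow_iff one_pos).2 hν).bdd_mul hg.aestronglyMeasurable
      (ae_restrict_of_forall_mem measurableSet_Ioo fun s hs ↦ hC s (Ioo_subset_Icc_self hs))
  rw [setIntegral_pos_iff_support_of_nonneg_ae (ae_restrict_of_forall_mem measurableSet_Ioo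
    fun s hs ↦ mul_nonneg (hg_nonneg s) (Real.rpow_nonneg hs.1.le ν)) hint]
  obtain ⟨ε, hε, hball⟩ := Metric.isOpen_iff.1 (isOpen_ne_fun hg continuous_const) 0 hg0
  have hsub : Ioo 0 (min ε 1) ⊆ Function.support (fun s ↦ g s * s ^ ν) ∩ Ioo 0 1 :=
    fun s hs ↦ ⟨mul_ne_zero
      (hball (by simpa [abs_of_pos hs.1] using hs.2.trans_le (min_le_left _ _)))
      (Real.rpow_pos_of_pos hs.1 ν).ne', hs.1, hs.2.trans_le (min_le_right _ _)⟩
  exact (by simp [hε] : 0 < volume (Ioo (0 : ℝ) (min ε 1))).trans_le (measure_mono hsub)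

theorem lommelSum_conj_ne_zero {ν : ℝ} (hν : -1 < ν) (w : ℂ) : lommelSum ν w (conj w) ≠ 0 := by
  have hF (s : ℝ) : besselF ν (w * s) * besselF ν (conj w * s) * (s ^ ν : ℝ) =
      (normSq (besselF ν (w * s)) * s ^ ν : ℝ) := by
    have : conj w * s = conj (w * s) := by rw [map_mul, conj_ofReal]
    rw [this, besselF_conj, mul_conj]
    push_cast
    rfl
  simp_rw [lommelSum_eq_integral hν, hF, integral_complex_ofReal, ofReal_ne_zero]
  refine (integral_mul_rpow_pos hν ?_ (fun s ↦ normSq_nonneg _) ?_).ne'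
  · exact continuous_normSq.comp
      ((continuous_besselF ν).comp (continuous_const.mul continuous_ofReal))
  · simpa using besselF_ofReal_ne_zero hν le_rfl

end

/-- Let `ν > -1`. Every complex zero of `f_ν` is a negative real number. -/
theorem stmt5 (ν : ℝ) (hν : -1 < ν) :
    ∀ w : ℂ, besselF ν w = 0 → ∃ x : ℝ, x < 0 ∧ w = (x : ℂ) := by
  intro w hw
  have him : w.im = 0 := by
    by_contra him
    have hconj : conj w - w ≠ 0 := sub_ne_zero.2 fun h ↦ him (conj_eq_iff_im.1 h)
    have h := sub_mul_lommelSum hν w (conj w)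
    rw [besselF_conj, hw, map_zero, zero_mul, mul_zero, sub_zero] at h
    exact mul_ne_zero hconj (lommelSum_conj_ne_zero hν w) h
  have hre : w = w.re := by simp [Complex.ext_iff, him]
  refine ⟨w.re, not_le.1 fun h ↦ besselF_ofReal_ne_zero hν h ?_, hre⟩
  rwa [← hre]
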